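/- arXiv:1310.8533 — 2 statements merged into one kernel-verified Lean document; each statement's English description precedes it below -/
import Mathlib

section
/- Let n and d be integers with n ≥ d + 2 and d ≥ 2, and let T_d = T(⌈(n−d)/2⌉, ⌊(n−d)/2⌋, d) be the tree of order n. Then the domination number of T_d equals ⌈(d+2)/3⌉. -/
/-!
Extending the path `v₁ … v_d` by one pendant at each end gives a path on `d + 2` vertices, and
a vertex dominates at most three of them: adjacent vertices have positions along this path
differing by at most one. Hence `γ ≥ ⌈(d+2)/3⌉`; conversely `v₁, v₄, v₇, …` together with `v_d`
dominate the tree.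
-/

/-- The algebraic connectivity of a graph: the second smallest Laplacian eigenvalue,
realized as the minimum of the Rayleigh quotient over unit vectors orthogonal to the
all-ones vector. -/
noncomputable def algConn {V : Type*} [Fintype V] [DecidableEq V] (G : SimpleGraph V) : ℝ :=
  letI := Classical.decRel G.Adj
  sInf { r : ℝ | ∃ x : V → ℝ, (∑ v, x v) = 0 ∧ (∑ v, (x v) ^ 2) = 1 ∧
      r = dotProduct x ((G.lapMatrix ℝ).mulVec x) }

/-- A Fiedler vector: an eigenvector of the Laplacian matrix for the eigenvalue `algConn G`. -/
noncomputable def IsFiedlerVector {V : Type*} [Fintype V] [DecidableEq V]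
    (G : SimpleGraph V) (x : V → ℝ) : Prop :=
  letI := Classical.decRel G.Adj
  x ≠ 0 ∧ (G.lapMatrix ℝ).mulVec x = algConn G • x

/-- The domination number: the minimum size of a set `S` of vertices such that every
vertex outside `S` has a neighbor in `S`. -/
noncomputable def dominationNumber {V : Type*} [Fintype V] (G : SimpleGraph V) : ℕ :=
  sInf { k : ℕ | ∃ S : Finset V, S.card = k ∧ ∀ v ∉ S, ∃ u ∈ S, G.Adj u v }

/-- The tree `T(k,l,d)`: a path on `d` vertices `0, …, d-1` with `k` pendant vertices
attached at vertex `0` and `l` pendant vertices attached at vertex `d-1`. -/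
def Tkld (k l d : ℕ) : SimpleGraph (Fin k ⊕ Fin d ⊕ Fin l) where
  Adj a b :=
    match a, b with
    | Sum.inl _, Sum.inr (Sum.inl j) => j.1 = 0
    | Sum.inr (Sum.inl j), Sum.inl _ => j.1 = 0
    | Sum.inr (Sum.inl i), Sum.inr (Sum.inl j) => i.1 + 1 = j.1 ∨ j.1 + 1 = i.1
    | Sum.inr (Sum.inl j), Sum.inr (Sum.inr _) => j.1 + 1 = d
    | Sum.inr (Sum.inr _), Sum.inr (Sum.inl j) => j.1 + 1 = d
    | _, _ => False
  symm := by
    constructor; rintro (a | b | c) (a' | b' | c') h <;> simp_all <;> tauto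
  loopless := by
    constructor; rintro (a | b | c) h <;> simp_all

/-- The coalescence `G₁(v) ◇ G₂(u)`: identify the vertex `v` of `G₁` with the vertex `u`
of `G₂` (the identified vertex is represented by `Sum.inl v`). -/
def coalesce {V₁ V₂ : Type*} (G₁ : SimpleGraph V₁) (G₂ : SimpleGraph V₂)
    (v : V₁) (u : V₂) : SimpleGraph (V₁ ⊕ {w : V₂ // w ≠ u}) where
  Adj a b :=
    match a, b with
    | Sum.inl a, Sum.inl b => G₁.Adj a b
    | Sum.inl a, Sum.inr b => a = v ∧ G₂.Adj u b.1
    | Sum.inr a, Sum.inl b => b = v ∧ G₂.Adj u a.1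
    | Sum.inr a, Sum.inr b => G₂.Adj a.1 b.1
  symm := by
    constructor; rintro (a | a) (b | b) h <;> simp_all [SimpleGraph.adj_comm]
  loopless := by
    constructor; rintro (a | a) h <;> simp_all

open Finset

namespace SimpleGraph

variable {V : Type*} (G : SimpleGraph V)

def IsDominatingSet (S : Finset V) : Prop :=
  ∀ v ∉ S, ∃ u ∈ S, G.Adj u v

variable {G}

theorem dominationNumber_eq_card [Fintype V] {S : Finset V} (hS : G.IsDominatingSet S)
    (hmin : ∀ S', G.IsDominatingSet S' → S.card ≤ S'.card) :
    dominationNumber G = S.card :=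
  le_antisymm (Nat.sInf_le ⟨S, rfl, hS⟩)
    (le_csInf ⟨_, S, rfl, hS⟩ fun _ ⟨S', hS'card, hS'⟩ => hS'card ▸ hmin S' hS')

/-- A vertex `s` dominates only vertices on the levels `f s - 1, f s, f s + 1`. -/
theorem IsDominatingSet.le_three_mul_card {S : Finset V} (hS : G.IsDominatingSet S)
    (f : V → ℕ) (hf : ∀ ⦃u v⦄, G.Adj u v → f v ≤ f u + 1) {m : ℕ}
    (hm : ∀ i < m, ∃ v, f v = i) : m ≤ 3 * S.card := by
  have hcover : range m ⊆ S.biUnion fun s => Icc (f s - 1) (f s + 1) := by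
    intro i hi
    obtain ⟨v, rfl⟩ := hm i (mem_range.1 hi)
    rw [mem_biUnion]
    by_cases hv : v ∈ S
    · exact ⟨v, hv, mem_Icc.2 ⟨by omega, by omega⟩⟩
    · obtain ⟨u, hu, huv⟩ := hS v hv
      have := hf huv
      have := hf huv.symm
      exact ⟨u, hu, mem_Icc.2 ⟨by omega, by omega⟩⟩
  calc m = (range m).card := (card_range m).symm
    _ ≤ (S.biUnion fun s => Icc (f s - 1) (f s + 1)).card := card_le_card hcover
    _ ≤ ∑ s ∈ S, (Icc (f s - 1) (f s + 1)).card := card_biUnion_le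
    _ ≤ ∑ _s ∈ S, 3 := sum_le_sum fun s _ => by rw [Nat.card_Icc]; omega
    _ = 3 * S.card := by rw [sum_const, smul_eq_mul, mul_comm]

end SimpleGraph

namespace Tkld

variable {k l d : ℕ}

/-- The position of a vertex along a longest path of the tree. -/
def level : Fin k ⊕ Fin d ⊕ Fin l → ℕ
  | Sum.inl _ => 0
  | Sum.inr (Sum.inl j) => j + 1
  | Sum.inr (Sum.inr _) => d + 1

theorem level_le (v : Fin k ⊕ Fin d ⊕ Fin l) : level v ≤ d + 1 := by
  rcases v with _ | j | _ <;> simp only [level] <;> omega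

theorem level_le_of_adj {u v : Fin k ⊕ Fin d ⊕ Fin l} (h : (Tkld k l d).Adj u v) :
    level v ≤ level u + 1 := by
  rcases u with _ | i | _ <;> rcases v with _ | j | _ <;>
    simp only [Tkld, level] at h ⊢ <;> omega

theorem adj_of_level {j : Fin d} {v : Fin k ⊕ Fin d ⊕ Fin l} (hv : v ≠ Sum.inr (Sum.inl j))
    (hlo : j ≤ level v) (hhi : level v ≤ j + 2) : (Tkld k l d).Adj (Sum.inr (Sum.inl j)) v := by
  rcases v with _ | i | _
  · change j.1 = 0
    simp only [level] at hlo
    omega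
  · change j.1 + 1 = i.1 ∨ i.1 + 1 = j.1
    simp only [level] at hlo hhi
    have : i.1 ≠ j.1 := fun h => hv (congrArg _ (congrArg _ (Fin.ext h)))
    omega
  · change j.1 + 1 = d
    simp only [level] at hhi
    omega

theorem exists_level_eq (hk : 0 < k) (hl : 0 < l) {i : ℕ} (hi : i < d + 2) :
    ∃ v : Fin k ⊕ Fin d ⊕ Fin l, level v = i := by
  rcases Nat.eq_zero_or_pos i with rfl | hi0
  · exact ⟨Sum.inl ⟨0, hk⟩, rfl⟩
  by_cases hid : i ≤ d
  · exact ⟨Sum.inr (Sum.inl ⟨i - 1, by omega⟩), by simp only [level]; omega⟩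
  · exact ⟨Sum.inr (Sum.inr ⟨0, hl⟩), by simp only [level]; omega⟩

def dominatingSet (hd : 0 < d) : Finset (Fin k ⊕ Fin d ⊕ Fin l) :=
  insert (Sum.inr (Sum.inl ⟨d - 1, by omega⟩))
    (univ.image fun i : Fin ((d + 1) / 3) => Sum.inr (Sum.inl ⟨3 * i, by omega⟩))

theorem card_dominatingSet (hd : 0 < d) :
    (dominatingSet (k := k) (l := l) hd).card = (d + 2 + 2) / 3 := by
  rw [dominatingSet, card_insert_of_notMem, card_image_of_injective, card_univ, Fintype.card_fin]
  · omega
  · intro i i' h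
    simp only [Sum.inr.injEq, Sum.inl.injEq, Fin.mk.injEq] at h
    exact Fin.ext (by omega)
  · simp only [mem_image, mem_univ, true_and, Sum.inr.injEq, Sum.inl.injEq, Fin.mk.injEq,
      not_exists]
    omega

theorem isDominatingSet_dominatingSet (hd : 0 < d) :
    (Tkld k l d).IsDominatingSet (dominatingSet hd) := by
  intro v hv
  have hvd := level_le v
  obtain ⟨j, hjS, hlo, hhi⟩ : ∃ j : Fin d, Sum.inr (Sum.inl j) ∈ dominatingSet hd ∧
      j ≤ level v ∧ level v ≤ j + 2 := by
    by_cases h : 3 * (level v / 3) + 2 ≤ d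
    · exact ⟨⟨3 * (level v / 3), by omega⟩,
        mem_insert_of_mem (mem_image.2 ⟨⟨level v / 3, by omega⟩, mem_univ _, rfl⟩),
        by dsimp only; omega, by dsimp only; omega⟩
    · exact ⟨⟨d - 1, by omega⟩, mem_insert_self _ _, by dsimp only; omega, by dsimp only; omega⟩
  exact ⟨_, hjS, adj_of_level (by rintro rfl; exact hv hjS) hlo hhi⟩

theorem dominationNumber_eq (hk : 0 < k) (hl : 0 < l) (hd : 0 < d) :
    dominationNumber (Tkld k l d) = (d + 2 + 2) / 3 := by
  rw [← card_dominatingSet hd,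
    SimpleGraph.dominationNumber_eq_card (isDominatingSet_dominatingSet hd)]
  intro S hS
  have := hS.le_three_mul_card level (fun _ _ => level_le_of_adj)
    fun _ hi => exists_level_eq hk hl hi
  rw [card_dominatingSet]
  omega

end Tkld

/-- for `n ≥ d + 2` and `d ≥ 2`, the domination number of the tree
`T_d = T(⌈(n−d)/2⌉, ⌊(n−d)/2⌋, d)` of order `n` equals `⌈(d+2)/3⌉`
(which as a natural number is `(d+4)/3`). -/
theorem dominationNumber_Td (n d : ℕ) (hd : 2 ≤ d) (hn : d + 2 ≤ n) :
    dominationNumber (Tkld ((n - d + 1) / 2) ((n - d) / 2) d) = (d + 2 + 2) / 3 :=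
  Tkld.dominationNumber_eq (by omega) (by omega) (by omega)
end

section
/- Every connected graph G of order n with domination number γ contains a spanning tree T whose domination number also equals γ. -/
/-!
Take a minimum dominating set `S` of `G` and join every vertex outside `S` to one of its
dominators. Each edge of this star forest has an endpoint of degree one, which lies on no cycle, so
the forest is acyclic and extends to a spanning tree `T ≤ G`. Since `S` still dominates `T`,
`γ(T) ≤ |S| = γ(G)`, while `γ(G) ≤ γ(T)` because deleting edges cannot decrease `γ`.
-/

namespace SimpleGraph

variable {V : Type*} {G H : SimpleGraph V}

theorem Walk.IsCycle.notMem_support_of_neighborSet_subsingleton {u v : V} {c : G.Walk u u}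
    (hc : c.IsCycle) (hv : (G.neighborSet v).Subsingleton) : v ∉ c.support := by
  intro hmem
  have hsub : (c.toSubgraph.neighborSet v).Subsingleton :=
    hv.anti fun _ hw => c.toSubgraph.adj_sub hw
  have hle := (Set.ncard_le_one_iff c.finite_neighborSet_toSubgraph).2 fun ha hb => hsub ha hb
  have := hc.ncard_neighborSet_toSubgraph_eq_two hmem
  omega

theorem isAcyclic_of_forall_adj_neighborSet_subsingleton
    (h : ∀ a b, G.Adj a b → (G.neighborSet a).Subsingleton ∨ (G.neighborSet b).Subsingleton) :
    G.IsAcyclic := by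
  intro u c hc
  have hu : u ∈ c.support := c.start_mem_support
  have hsnd : c.snd ∈ c.support := c.getVert_mem_support 1
  rcases h u c.snd (c.adj_snd hc.not_nil) with hs | hs
  · exact hc.notMem_support_of_neighborSet_subsingleton hs hu
  · exact hc.notMem_support_of_neighborSet_subsingleton hs hsnd

theorem isAcyclic_fromRel_apply {S : Set V} {f : V → V} (hf : ∀ v ∉ S, f v ∈ S) :
    (fromRel fun a b => a ∉ S ∧ b = f a).IsAcyclic := by
  have hleaf : ∀ a ∉ S, ((fromRel fun a b => a ∉ S ∧ b = f a).neighborSet a).Subsingleton := by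
    refine fun a ha => Set.subsingleton_of_subset_singleton (a := f a) fun b hb => ?_
    obtain ⟨-, ⟨-, rfl⟩ | ⟨hb, rfl⟩⟩ := hb
    · rfl
    · exact absurd (hf b hb) ha
  refine isAcyclic_of_forall_adj_neighborSet_subsingleton ?_
  rintro a b ⟨-, ⟨ha, -⟩ | ⟨hb, -⟩⟩
  · exact Or.inl (hleaf a ha)
  · exact Or.inr (hleaf b hb)

def IsDominating (G : SimpleGraph V) (S : Finset V) : Prop :=
  ∀ v ∉ S, ∃ u ∈ S, G.Adj u v

theorem IsDominating.mono {S : Finset V} (hGH : G ≤ H) (hS : G.IsDominating S) :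
    H.IsDominating S :=
  fun v hv => (hS v hv).imp fun _ ⟨hu, huv⟩ => ⟨hu, hGH huv⟩

theorem IsDominating.exists_isAcyclic_le {S : Finset V} (hS : G.IsDominating S) :
    ∃ F ≤ G, F.IsAcyclic ∧ F.IsDominating S := by
  choose! f hfS hfG using hS
  refine ⟨fromRel fun a b => a ∉ (S : Set V) ∧ b = f a, ?_,
    isAcyclic_fromRel_apply (S := (S : Set V)) hfS, fun v hv => ⟨f v, hfS v hv, ?_⟩⟩
  · rintro a b ⟨-, ⟨ha, rfl⟩ | ⟨hb, rfl⟩⟩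
    · exact (hfG a ha).symm
    · exact hfG b hb
  · exact (fromRel_adj _ _ _).2 ⟨fun h => hv (h ▸ hfS v hv), Or.inr ⟨hv, rfl⟩⟩

end SimpleGraph

section Fintype

open SimpleGraph

variable {V : Type*} [Fintype V] {G H : SimpleGraph V}

theorem dominationNumber_le_card {S : Finset V} (hS : G.IsDominating S) :
    dominationNumber G ≤ S.card :=
  Nat.sInf_le ⟨S, rfl, hS⟩

theorem SimpleGraph.exists_isDominating_card_eq_dominationNumber (G : SimpleGraph V) :
    ∃ S : Finset V, G.IsDominating S ∧ S.card = dominationNumber G := by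
  obtain ⟨S, hcard, hS⟩ := Nat.sInf_mem
    (s := {k | ∃ S : Finset V, S.card = k ∧ G.IsDominating S})
    ⟨_, Finset.univ, rfl, fun v hv => absurd (Finset.mem_univ v) hv⟩
  exact ⟨S, hS, hcard⟩

theorem dominationNumber_anti (hGH : G ≤ H) : dominationNumber H ≤ dominationNumber G := by
  obtain ⟨S, hS, hcard⟩ := G.exists_isDominating_card_eq_dominationNumber
  exact hcard ▸ dominationNumber_le_card (hS.mono hGH)

end Fintype

/-- every connected graph `G` contains a spanning tree `T` with the same
domination number as `G`. -/
theorem exists_spanningTree_same_dominationNumber {V : Type*} [Fintype V]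
    (G : SimpleGraph V) (hG : G.Connected) :
    ∃ T : SimpleGraph V, T ≤ G ∧ T.IsTree ∧ dominationNumber T = dominationNumber G := by
  obtain ⟨S, hS, hcard⟩ := G.exists_isDominating_card_eq_dominationNumber
  obtain ⟨F, hFG, hF, hFS⟩ := hS.exists_isAcyclic_le
  obtain ⟨T, hFT, hTG, hT⟩ := hG.exists_isTree_le_of_le_of_isAcyclic hFG hF
  refine ⟨T, hTG, hT, le_antisymm ?_ (dominationNumber_anti hTG)⟩
  exact hcard ▸ dominationNumber_le_card (hFS.mono hFT)
end
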